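/- arXiv:0708.0568 — 2 statements merged into one kernel-verified Lean document; each statement's English description precedes it below -/
import Mathlib

section
/- For 0 < s < 1, the s-energy of the uniform measure on the unit circle, I_s := (1/2π)∫_0^{2π}(2 - 2cos φ)^{-s/2} dφ = (1/2π)∫_0^{2π}(2 sin(φ/2))^{-s} dφ, equals Γ(1-s)/Γ(1-s/2)², and also equals 2^{-s}Γ((1-s)/2)/(√π Γ(1-s/2)). -/
/-!
As `2 - 2 cos φ = (2 sin (φ/2))²`, the integral equals `2^(1-s) ∫₀^π sin^(-s)`. By symmetry about
`π/2` and the substitution `x = sin² θ`, `∫₀^{π/2} sin^a` is half the Beta integral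
`B((a+1)/2, 1/2) = √π Γ((a+1)/2) / Γ(a/2+1)`; this gives the second closed form, and the
duplication formula turns it into `Γ(1-s)/Γ(1-s/2)²`.
-/

open Real MeasureTheory Set intervalIntegral

section BetaIntegral

variable {p q : ℝ}

lemma ofReal_rpow_mul_one_sub_rpow {x : ℝ} (hx : x ∈ Icc (0 : ℝ) 1) :
    ((x ^ (p - 1) * (1 - x) ^ (q - 1) : ℝ) : ℂ)
      = (x : ℂ) ^ ((p : ℂ) - 1) * (1 - (x : ℂ)) ^ ((q : ℂ) - 1) := by
  rw [Complex.ofReal_mul, Complex.ofReal_cpow hx.1, Complex.ofReal_cpow (sub_nonneg.2 hx.2)]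
  push_cast
  rfl

lemma integrableOn_rpow_mul_one_sub_rpow (hp : 0 < p) (hq : 0 < q) :
    IntegrableOn (fun x : ℝ ↦ x ^ (p - 1) * (1 - x) ^ (q - 1)) (Ioo 0 1) := by
  have h := (Complex.betaIntegral_convergent (u := p) (v := q) (by simpa) (by simpa)).1
  refine IntegrableOn.congr_fun (h.mono_set Ioo_subset_Ioc_self).re (fun x hx ↦ ?_)
    measurableSet_Ioo
  simp [← ofReal_rpow_mul_one_sub_rpow (Ioo_subset_Icc_self hx)]

lemma setIntegral_rpow_mul_one_sub_rpow (hp : 0 < p) (hq : 0 < q) :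
    ∫ x in Ioo (0 : ℝ) 1, x ^ (p - 1) * (1 - x) ^ (q - 1)
      = Gamma p * Gamma q / Gamma (p + q) := by
  apply Complex.ofReal_injective
  have hB := Complex.betaIntegral_eq_Gamma_mul_div p q (by simpa) (by simpa)
  rw [Complex.betaIntegral, integral_of_le zero_le_one, integral_Ioc_eq_integral_Ioo] at hB
  rw [← integral_complex_ofReal, Complex.ofReal_div, Complex.ofReal_mul, ← Complex.Gamma_ofReal,
    ← Complex.Gamma_ofReal, ← Complex.Gamma_ofReal, Complex.ofReal_add, ← hB]
  exact setIntegral_congr_fun measurableSet_Ioo fun x hx ↦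
    ofReal_rpow_mul_one_sub_rpow (p := p) (q := q) (Ioo_subset_Icc_self hx)

lemma hasDerivAt_sin_sq (θ : ℝ) :
    HasDerivAt (fun θ ↦ sin θ ^ 2) (2 * sin θ * cos θ) θ :=
  ((hasDerivAt_sin θ).fun_pow 2).congr_deriv (by push_cast; ring)

lemma injOn_sin_sq : InjOn (fun θ ↦ sin θ ^ 2) (Ioo 0 (π / 2)) := by
  intro a ha b hb hab
  have hsin {θ} (hθ : θ ∈ Ioo 0 (π / 2)) : 0 ≤ sin θ :=
    sin_nonneg_of_nonneg_of_le_pi hθ.1.le (by linarith [hθ.2, pi_pos])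
  refine injOn_sin ⟨by linarith [ha.1, pi_pos], ha.2.le⟩ ⟨by linarith [hb.1, pi_pos], hb.2.le⟩ ?_
  exact (pow_left_inj₀ (hsin ha) (hsin hb) two_ne_zero).1 hab

lemma image_sin_sq_Ioo : (fun θ ↦ sin θ ^ 2) '' Ioo 0 (π / 2) = Ioo 0 1 := by
  refine Subset.antisymm ?_ ?_
  · rintro _ ⟨θ, hθ, rfl⟩
    have hpos : 0 < sin θ := sin_pos_of_pos_of_lt_pi hθ.1 (by linarith [hθ.2, pi_pos])
    have hlt : sin θ < 1 := by
      simpa using strictMonoOn_sin ⟨by linarith [hθ.1, pi_pos], hθ.2.le⟩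
        ⟨by linarith [pi_pos], le_rfl⟩ hθ.2
    exact ⟨by positivity, by nlinarith⟩
  · have h := intermediate_value_Ioo (by positivity : (0 : ℝ) ≤ π / 2)
      (f := fun θ ↦ sin θ ^ 2) (by fun_prop)
    norm_num at h
    exact h

lemma abs_deriv_sin_sq_mul_rpow_mul_one_sub_rpow {θ : ℝ} (hθ : θ ∈ Ioo 0 (π / 2)) :
    |2 * sin θ * cos θ| * ((sin θ ^ 2) ^ (p - 1) * (1 - sin θ ^ 2) ^ (q - 1))
      = 2 * (sin θ ^ (2 * p - 1) * cos θ ^ (2 * q - 1)) := by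
  have hsin : 0 < sin θ := sin_pos_of_pos_of_lt_pi hθ.1 (by linarith [hθ.2, pi_pos])
  have hcos : 0 < cos θ := cos_pos_of_mem_Ioo ⟨by linarith [hθ.1, pi_pos], hθ.2⟩
  rw [← cos_sq', abs_of_pos (by positivity), ← rpow_natCast_mul hsin.le,
    ← rpow_natCast_mul hcos.le, show 2 * p - 1 = (2 : ℕ) * (p - 1) + 1 by push_cast; ring,
    show 2 * q - 1 = (2 : ℕ) * (q - 1) + 1 by push_cast; ring, rpow_add_one hsin.ne',
    rpow_add_one hcos.ne']
  ring

theorem integral_sin_rpow_mul_cos_rpow (hp : 0 < p) (hq : 0 < q) :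
    ∫ θ in Ioo 0 (π / 2), sin θ ^ (2 * p - 1) * cos θ ^ (2 * q - 1)
      = Gamma p * Gamma q / (2 * Gamma (p + q)) := by
  have h := integral_image_eq_integral_abs_deriv_smul measurableSet_Ioo
    (fun θ _ ↦ (hasDerivAt_sin_sq θ).hasDerivWithinAt) injOn_sin_sq
    (fun x ↦ x ^ (p - 1) * (1 - x) ^ (q - 1))
  simp only [smul_eq_mul] at h
  rw [image_sin_sq_Ioo, setIntegral_rpow_mul_one_sub_rpow hp hq,
    setIntegral_congr_fun measurableSet_Ioo fun θ hθ ↦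
      abs_deriv_sin_sq_mul_rpow_mul_one_sub_rpow hθ, MeasureTheory.integral_const_mul] at h
  rw [mul_comm 2 (Gamma _), ← div_div, h, mul_div_cancel_left₀ _ two_ne_zero]

theorem integrableOn_sin_rpow_mul_cos_rpow (hp : 0 < p) (hq : 0 < q) :
    IntegrableOn (fun θ ↦ sin θ ^ (2 * p - 1) * cos θ ^ (2 * q - 1)) (Ioo 0 (π / 2)) := by
  have h := (integrableOn_image_iff_integrableOn_abs_deriv_smul measurableSet_Ioo
    (fun θ _ ↦ (hasDerivAt_sin_sq θ).hasDerivWithinAt) injOn_sin_sq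
    (fun x ↦ x ^ (p - 1) * (1 - x) ^ (q - 1))).1
    (image_sin_sq_Ioo ▸ integrableOn_rpow_mul_one_sub_rpow hp hq)
  refine IntegrableOn.congr_fun (h.const_mul 2⁻¹) (fun θ hθ ↦ ?_) measurableSet_Ioo
  simp only [smul_eq_mul, abs_deriv_sin_sq_mul_rpow_mul_one_sub_rpow hθ]
  ring

end BetaIntegral

section SinRpow

variable {a : ℝ}

lemma sin_rpow_eq_sin_rpow_mul_cos_rpow (a θ : ℝ) :
    sin θ ^ a = sin θ ^ (2 * ((a + 1) / 2) - 1) * cos θ ^ (2 * (1 / 2 : ℝ) - 1) := by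
  rw [show 2 * ((a + 1) / 2) - 1 = a by ring]
  norm_num

lemma intervalIntegrable_sin_rpow (ha : -1 < a) :
    IntervalIntegrable (fun x ↦ sin x ^ a) volume 0 (π / 2) := by
  rw [intervalIntegrable_iff_integrableOn_Ioo_of_le (by positivity)]
  simpa only [← sin_rpow_eq_sin_rpow_mul_cos_rpow] using
    integrableOn_sin_rpow_mul_cos_rpow (p := (a + 1) / 2) (q := 1 / 2) (by linarith) one_half_pos

theorem integral_sin_rpow (ha : -1 < a) :
    ∫ x in 0..π, sin x ^ a = √π * Gamma ((a + 1) / 2) / Gamma (a / 2 + 1) := by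
  have hhalf : ∫ x in 0..π / 2, sin x ^ a = √π * Gamma ((a + 1) / 2) / (2 * Gamma (a / 2 + 1)) := by
    rw [integral_of_le (by positivity), integral_Ioc_eq_integral_Ioo]
    simp only [sin_rpow_eq_sin_rpow_mul_cos_rpow a]
    rw [integral_sin_rpow_mul_cos_rpow (by linarith) one_half_pos, Gamma_one_half_eq,
      show (a + 1) / 2 + 1 / 2 = a / 2 + 1 by ring, mul_comm √π]
  have hrefl : ∫ x in π / 2..π, sin x ^ a = ∫ x in 0..π / 2, sin x ^ a := by
    simpa [sin_pi_sub, show π - π / 2 = π / 2 by ring] using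
      (integral_comp_sub_left (fun x ↦ sin x ^ a) π (a := 0) (b := π / 2)).symm
  have hint := intervalIntegrable_sin_rpow ha
  have hint' : IntervalIntegrable (fun x ↦ sin x ^ a) volume (π / 2) π := by
    simpa [sin_pi_sub, show π - π / 2 = π / 2 by ring] using (hint.comp_sub_left π).symm
  rw [← integral_add_adjacent_intervals hint hint', hrefl, hhalf]
  field_simp
  ring

end SinRpow

lemma two_sub_two_mul_cos_eq_sq (φ : ℝ) : 2 - 2 * cos φ = (2 * sin (φ / 2)) ^ 2 := by
  have h := cos_two_mul (φ / 2)
  rw [mul_div_cancel₀ φ two_ne_zero] at h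
  linear_combination (-2) * h - 4 * sin_sq_add_cos_sq (φ / 2)

lemma two_sub_two_mul_cos_rpow {φ : ℝ} (hφ : φ ∈ Icc 0 (2 * π)) (r : ℝ) :
    (2 - 2 * cos φ) ^ (r / 2) = (2 * sin (φ / 2)) ^ r := by
  have hsin : 0 ≤ sin (φ / 2) :=
    sin_nonneg_of_nonneg_of_le_pi (by linarith [hφ.1]) (by linarith [hφ.2])
  rw [two_sub_two_mul_cos_eq_sq, ← rpow_natCast_mul (by positivity)]
  push_cast
  rw [mul_div_cancel₀ r two_ne_zero]

theorem integral_two_mul_sin_half_rpow {a : ℝ} (ha : -1 < a) :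
    ∫ φ in 0..2 * π, (2 * sin (φ / 2)) ^ a
      = 2 ^ (a + 1) * √π * Gamma ((a + 1) / 2) / Gamma (a / 2 + 1) := by
  have hscale := integral_comp_div (fun u ↦ (2 * sin u) ^ a) (two_ne_zero (α := ℝ))
    (a := 0) (b := 2 * π)
  have hmul : ∫ u in 0..π, (2 * sin u) ^ a = 2 ^ a * ∫ u in 0..π, sin u ^ a := by
    rw [← intervalIntegral.integral_const_mul]
    refine integral_congr fun u hu ↦ mul_rpow zero_le_two ?_
    rw [uIcc_of_le pi_pos.le] at hu
    exact sin_nonneg_of_nonneg_of_le_pi hu.1 hu.2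
  rw [hscale, zero_div, mul_div_cancel_left₀ π two_ne_zero, hmul, integral_sin_rpow ha,
    rpow_add_one two_ne_zero, smul_eq_mul]
  ring

theorem Gamma_one_sub_div_Gamma_one_sub_half_sq (s : ℝ) :
    Gamma (1 - s) / Gamma (1 - s / 2) ^ 2
      = 2 ^ (-s) * Gamma ((1 - s) / 2) / (√π * Gamma (1 - s / 2)) := by
  by_cases hG : Gamma (1 - s / 2) = 0
  · simp [hG] -- both sides are `_ / 0 = 0`
  have hdup := Gamma_mul_Gamma_add_half ((1 - s) / 2)
  rw [show (1 - s) / 2 + 1 / 2 = 1 - s / 2 by ring, show 2 * ((1 - s) / 2) = 1 - s by ring,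
    show 1 - (1 - s) = s by ring] at hdup
  have h2 : (2 : ℝ) ^ (-s) * 2 ^ s = 1 := by rw [← rpow_add two_pos, neg_add_cancel, rpow_zero]
  have hπ : √π ≠ 0 := by positivity
  rw [div_eq_div_iff (pow_ne_zero 2 hG) (mul_ne_zero hπ hG)]
  linear_combination (-(2 : ℝ) ^ (-s) * Gamma (1 - s / 2)) * hdup
    - (Gamma (1 - s) * √π * Gamma (1 - s / 2)) * h2

theorem circle_energy_general (s : ℝ) (hs1 : s < 1) :
    ((1 / (2 * Real.pi)) * ∫ φ in (0:ℝ)..(2 * Real.pi), (2 - 2 * Real.cos φ) ^ (-(s / 2)))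
      = (1 / (2 * Real.pi)) * ∫ φ in (0:ℝ)..(2 * Real.pi), (2 * Real.sin (φ / 2)) ^ (-s) ∧
    ((1 / (2 * Real.pi)) * ∫ φ in (0:ℝ)..(2 * Real.pi), (2 - 2 * Real.cos φ) ^ (-(s / 2)))
      = Real.Gamma (1 - s) / (Real.Gamma (1 - s / 2)) ^ 2 ∧
    ((1 / (2 * Real.pi)) * ∫ φ in (0:ℝ)..(2 * Real.pi), (2 - 2 * Real.cos φ) ^ (-(s / 2)))
      = (2 : ℝ) ^ (-s) * Real.Gamma ((1 - s) / 2)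
          / (Real.sqrt Real.pi * Real.Gamma (1 - s / 2)) := by
  have hsin : ∫ φ in (0:ℝ)..(2 * π), (2 - 2 * cos φ) ^ (-(s / 2))
      = ∫ φ in (0:ℝ)..(2 * π), (2 * sin (φ / 2)) ^ (-s) := by
    refine integral_congr fun φ hφ ↦ ?_
    rw [uIcc_of_le (by positivity)] at hφ
    rw [← neg_div, two_sub_two_mul_cos_rpow hφ]
  have hval : (1 / (2 * π)) * ∫ φ in (0:ℝ)..(2 * π), (2 * sin (φ / 2)) ^ (-s)
      = 2 ^ (-s) * Gamma ((1 - s) / 2) / (√π * Gamma (1 - s / 2)) := by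
    rw [integral_two_mul_sin_half_rpow (by linarith), rpow_add_one two_ne_zero,
      show (-s + 1) / 2 = (1 - s) / 2 by ring, show -s / 2 + 1 = 1 - s / 2 by ring]
    nth_rewrite 1 [← mul_self_sqrt pi_pos.le]
    field_simp
  refine ⟨by rw [hsin], ?_, ?_⟩
  · rw [hsin, hval, Gamma_one_sub_div_Gamma_one_sub_half_sq]
  · rw [hsin, hval]

/-- The `s`-energy of the uniform measure on the unit circle:
`(1/2π)∫₀^{2π}(2-2cos φ)^{-s/2} dφ = (1/2π)∫₀^{2π}(2 sin(φ/2))^{-s} dφ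
 = Γ(1-s)/Γ(1-s/2)² = 2^{-s}Γ((1-s)/2)/(√π Γ(1-s/2))` for `0 < s < 1`. -/
theorem circle_energy (s : ℝ) (hs0 : 0 < s) (hs1 : s < 1) :
    ((1 / (2 * Real.pi)) * ∫ φ in (0:ℝ)..(2 * Real.pi), (2 - 2 * Real.cos φ) ^ (-(s / 2)))
      = (1 / (2 * Real.pi)) * ∫ φ in (0:ℝ)..(2 * Real.pi), (2 * Real.sin (φ / 2)) ^ (-s) ∧
    ((1 / (2 * Real.pi)) * ∫ φ in (0:ℝ)..(2 * Real.pi), (2 - 2 * Real.cos φ) ^ (-(s / 2)))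
      = Real.Gamma (1 - s) / (Real.Gamma (1 - s / 2)) ^ 2 ∧
    ((1 / (2 * Real.pi)) * ∫ φ in (0:ℝ)..(2 * Real.pi), (2 - 2 * Real.cos φ) ^ (-(s / 2)))
      = (2 : ℝ) ^ (-s) * Real.Gamma ((1 - s) / 2)
          / (Real.sqrt Real.pi * Real.Gamma (1 - s / 2)) :=
  circle_energy_general s hs1
end

section
/- For fixed z,w in the closed right half-plane with z ≠ w, the limit lim_{s→0⁺} (K_s(z,w) - 1)/s = log(2/(|z-w| + |z-w*|)), where w* = -conj(w). -/
/-!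
Put `a = |z - w|`, `b = |z - w*|`, `p = (b + a) / 2` and `q = (b - a) / 2`. Then the base of the
integrand in `K_s(z, w)` is `p² + q² - 2pq cos φ = |p e^{iφ} - q|²`, and `|q| < p` because
`0 < a ≤ b` in the closed right half-plane. Differentiating under the integral sign at `s = 0`,
the limit is `-1/2` times the circle average of `log |p e^{iφ} - q|²`; since `q` lies in the
closed disc of radius `p`, this average is `2 log p` by the mean value property of the harmonic
function `log |· - q|`.
-/

open Real

/-- The rotation-averaged Riesz `s`-kernel on the right half-plane:
`K_s(z,w) = (1/2π) ∫₀^{2π} (x² + u² - 2xu cos φ + (y-v)²)^{-s/2} dφ`,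
where `z = x + iy`, `w = u + iv`. -/
noncomputable def rotKernel (s : ℝ) (z w : ℂ) : ℝ :=
  (1 / (2 * Real.pi)) * ∫ φ in (0:ℝ)..(2 * Real.pi),
    (z.re ^ 2 + w.re ^ 2 - 2 * z.re * w.re * Real.cos φ + (z.im - w.im) ^ 2) ^ (-(s / 2))

open Filter

open Set Interval MeasureTheory

theorem hasDerivAt_intervalIntegral_exp_mul {L : ℝ → ℝ} {a b : ℝ} (hL : ContinuousOn L [[a, b]])
    (s₀ : ℝ) :
    HasDerivAt (fun s => ∫ x in a..b, exp (s * L x))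
      (∫ x in a..b, exp (s₀ * L x) * L x) s₀ := by
  obtain ⟨M, hM⟩ := isCompact_uIcc.exists_bound_of_continuousOn hL
  have hcont : ∀ s, ContinuousOn (fun x => exp (s * L x)) [[a, b]] := fun s => by fun_prop
  have hmeas : ∀ {F : ℝ → ℝ}, ContinuousOn F [[a, b]] →
      AEStronglyMeasurable F (volume.restrict (Ι a b)) := fun hF =>
    (hF.mono uIoc_subset_uIcc).aestronglyMeasurable measurableSet_uIoc
  refine (intervalIntegral.hasDerivAt_integral_of_dominated_loc_of_deriv_le
    (bound := fun _ => exp ((|s₀| + 1) * M) * M) (Metric.ball_mem_nhds s₀ one_pos)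
    (.of_forall fun s => hmeas (hcont s)) (hcont s₀).intervalIntegrable
    (hmeas ((hcont s₀).mul hL)) (.of_forall fun x hx s hs => ?_) intervalIntegrable_const
    (.of_forall fun x _ s _ => (hasDerivAt_mul_const (L x)).exp)).2
  have hLx : |L x| ≤ M := hM x (uIoc_subset_uIcc hx)
  have hs' : |s| ≤ |s₀| + 1 := by
    have := abs_sub_abs_le_abs_sub s s₀
    rw [Metric.mem_ball, Real.dist_eq] at hs
    linarith
  have hexp : s * L x ≤ (|s₀| + 1) * M :=
    calc s * L x ≤ |s| * |L x| := (le_abs_self _).trans (abs_mul _ _).le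
      _ ≤ (|s₀| + 1) * M := by gcongr
  rw [norm_mul, Real.norm_eq_abs, Real.norm_eq_abs, abs_of_pos (exp_pos _)]
  exact mul_le_mul (exp_le_exp.mpr hexp) hLx (abs_nonneg _) (exp_pos _).le

theorem hasDerivAt_intervalIntegral_rpow {g : ℝ → ℝ} {a b : ℝ} (hg : ContinuousOn g [[a, b]])
    (hpos : ∀ x ∈ [[a, b]], 0 < g x) (s₀ : ℝ) :
    HasDerivAt (fun s => ∫ x in a..b, g x ^ s) (∫ x in a..b, g x ^ s₀ * log (g x)) s₀ := by
  have hexp : ∀ s, ∀ x ∈ [[a, b]], g x ^ s = exp (s * log (g x)) := fun s x hx => by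
    rw [rpow_def_of_pos (hpos x hx), mul_comm]
  convert hasDerivAt_intervalIntegral_exp_mul (hg.log fun x hx => (hpos x hx).ne') s₀ using 1
  · exact funext fun s => intervalIntegral.integral_congr (hexp s)
  · exact intervalIntegral.integral_congr fun x hx => by simp only [hexp s₀ x hx]

theorem norm_circleMap_zero_sub_ofReal_sq (p q φ : ℝ) :
    ‖circleMap 0 p φ - q‖ ^ 2 = p ^ 2 + q ^ 2 - 2 * p * q * cos φ := by
  rw [Complex.sq_norm, Complex.normSq_apply]
  simp only [circleMap_zero, Complex.sub_re, Complex.mul_re, Complex.ofReal_re,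
    Complex.exp_ofReal_mul_I_re, Complex.ofReal_im, Complex.exp_ofReal_mul_I_im, zero_mul,
    sub_zero, Complex.sub_im, Complex.mul_im, add_zero]
  linear_combination p ^ 2 * sin_sq_add_cos_sq φ

theorem sq_add_sq_sub_mul_cos_pos {p q : ℝ} (h : |q| < |p|) (φ : ℝ) :
    0 < p ^ 2 + q ^ 2 - 2 * p * q * cos φ := by
  rw [← norm_circleMap_zero_sub_ofReal_sq]
  refine pow_pos (norm_pos_iff.2 (sub_ne_zero.2 fun heq => h.ne' ?_)) 2
  simpa [norm_circleMap_zero] using congrArg norm heq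

theorem integral_log_sq_add_sq_sub_mul_cos {p q : ℝ} (h : |q| ≤ |p|) :
    ∫ φ in 0..2 * π, log (p ^ 2 + q ^ 2 - 2 * p * q * cos φ) = 4 * π * log p := by
  have havg := circleAverage_log_norm_sub_const_of_mem_closedBall (a := (q : ℂ)) (c := 0) (R := p)
    (by simpa using h)
  rw [circleAverage_def, smul_eq_mul] at havg
  simp_rw [← norm_circleMap_zero_sub_ofReal_sq, log_pow, intervalIntegral.integral_const_mul]
  field_simp at havg
  push_cast
  linarith

theorem sq_norm_sub_eq (z w : ℂ) : ‖z - w‖ ^ 2 = (z.re - w.re) ^ 2 + (z.im - w.im) ^ 2 := by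
  rw [← dist_eq_norm, Complex.dist_eq_re_im, sq_sqrt (by positivity)]

theorem sq_norm_sub_neg_conj_eq (z w : ℂ) :
    ‖z - -(starRingEnd ℂ w)‖ ^ 2 = (z.re + w.re) ^ 2 + (z.im - w.im) ^ 2 := by
  rw [sq_norm_sub_eq]
  simp only [Complex.neg_re, Complex.neg_im, Complex.conj_re, Complex.conj_im, sub_neg_eq_add,
    neg_neg]

theorem norm_sub_le_norm_sub_neg_conj {z w : ℂ} (hz : 0 ≤ z.re) (hw : 0 ≤ w.re) :
    ‖z - w‖ ≤ ‖z - -(starRingEnd ℂ w)‖ := by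
  rw [← sq_le_sq₀ (norm_nonneg _) (norm_nonneg _), sq_norm_sub_eq, sq_norm_sub_neg_conj_eq]
  nlinarith [mul_nonneg hz hw]

@[simp]
theorem rotKernel_zero (z w : ℂ) : rotKernel 0 z w = 1 := by
  simp only [rotKernel, zero_div, neg_zero, rpow_zero, intervalIntegral.integral_const, sub_zero,
    smul_eq_mul, mul_one]
  field_simp

theorem hasDerivAt_rotKernel {z w : ℂ} (hz : 0 ≤ z.re) (hw : 0 ≤ w.re) (hzw : z ≠ w) :
    HasDerivAt (fun s => rotKernel s z w)
      (log (2 / (‖z - w‖ + ‖z - -(starRingEnd ℂ w)‖))) 0 := by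
  set a := ‖z - w‖
  set b := ‖z - -(starRingEnd ℂ w)‖
  have ha2 : a ^ 2 = (z.re - w.re) ^ 2 + (z.im - w.im) ^ 2 := sq_norm_sub_eq z w
  have hb2 : b ^ 2 = (z.re + w.re) ^ 2 + (z.im - w.im) ^ 2 := sq_norm_sub_neg_conj_eq z w
  have ha : 0 < a := norm_pos_iff.2 (sub_ne_zero.2 hzw)
  have hab : a ≤ b := norm_sub_le_norm_sub_neg_conj hz hw
  have hqp : |(b - a) / 2| < |(b + a) / 2| := by
    rw [abs_lt, abs_of_pos (by linarith)]; constructor <;> linarith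
  set p := (b + a) / 2
  set q := (b - a) / 2
  have hbase : ∀ φ, z.re ^ 2 + w.re ^ 2 - 2 * z.re * w.re * cos φ + (z.im - w.im) ^ 2
      = p ^ 2 + q ^ 2 - 2 * p * q * cos φ := fun φ => by
    linear_combination (-(1:ℝ)/2 - cos φ / 2) * ha2 + (-(1:ℝ)/2 + cos φ / 2) * hb2
  have hI := hasDerivAt_intervalIntegral_rpow (a := 0) (b := 2 * π)
    (by fun_prop) (fun φ _ => sq_add_sq_sub_mul_cos_pos hqp φ) 0
  simp only [rpow_zero, one_mul, integral_log_sq_add_sq_sub_mul_cos hqp.le] at hI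
  have hK := (hI.const_mul (1 / (2 * π))).comp_of_eq 0 ((hasDerivAt_id' 0).div_const 2).neg
    (by simp)
  refine (hK.congr_deriv ?_).congr_of_eventuallyEq (.of_forall fun s => ?_)
  · rw [show 2 / (a + b) = p⁻¹ by rw [inv_div, add_comm], log_inv]
    field_simp
    ring
  · simp [rotKernel, hbase]

/-- Logarithmic limit: for fixed `z ≠ w` in the closed right half-plane,
`(K_s(z,w) - 1)/s → log(2/(|z-w| + |z-w*|))` as `s → 0⁺`, where `w* = -conj w`. -/
theorem rotKernel_log_limit (z w : ℂ) (hz : 0 ≤ z.re) (hw : 0 ≤ w.re) (hzw : z ≠ w) :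
    Tendsto (fun s : ℝ => (rotKernel s z w - 1) / s) (nhdsWithin 0 (Set.Ioi 0))
      (nhds (Real.log (2 /
        (‖z - w‖ + ‖z - -(starRingEnd ℂ w)‖)))) := by
  refine (hasDerivAt_rotKernel hz hw hzw).tendsto_slope_zero_right.congr fun s => ?_
  simp [div_eq_inv_mul]
end
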